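/- arXiv:1301.2730 — 5 statements merged into one kernel-verified Lean document; each statement's English description precedes it below -/
import Mathlib

section
/- Every k-subalgebra A of the polynomial ring k[x] in one variable over a field k is finitely generated as a k-algebra. -/
/-!
If `A ≠ k`, it contains a monic polynomial `p` of positive degree, and `x` is a root of the monic
polynomial `p(T) - p` over `A`. Hence `k[x]` is a finite `A`-module, and the Artin–Tate lemma for
the tower `k ⊆ A ⊆ k[x]` shows that `A` is a finitely generated `k`-algebra.
-/

open Polynomial

namespace Polynomial

theorem isIntegral_X_of_monic_mem {R : Type*} [CommRing R] [Nontrivial R] {A : Subalgebra R R[X]}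
    {p : R[X]} (hp : p.Monic) (hdeg : p.natDegree ≠ 0) (hpA : p ∈ A) : IsIntegral A (X : R[X]) :=
  IsIntegral.of_aeval_monic (hp.map (algebraMap R A)) (by rwa [hp.natDegree_map]) <| by
    rw [aeval_map_algebraMap, aeval_X_left_apply]
    exact isIntegral_algebraMap (x := (⟨p, hpA⟩ : A))

theorem adjoin_X_eq_top_of_isScalarTower {R A : Type*} [CommRing R] [CommRing A] [Algebra R A]
    [Algebra A R[X]] [IsScalarTower R A R[X]] : Algebra.adjoin A ({X} : Set R[X]) = ⊤ := by
  refine Subalgebra.restrictScalars_injective R ?_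
  rw [Subalgebra.restrictScalars_top, eq_top_iff, ← adjoin_X]
  exact Algebra.adjoin_le (Algebra.subset_adjoin (R := A))

theorem finite_of_monic_mem {R : Type*} [CommRing R] [Nontrivial R] {A : Subalgebra R R[X]}
    {p : R[X]} (hp : p.Monic) (hdeg : p.natDegree ≠ 0) (hpA : p ∈ A) : Module.Finite A R[X] := by
  have := (isIntegral_X_of_monic_mem hp hdeg hpA).fg_adjoin_singleton
  rw [adjoin_X_eq_top_of_isScalarTower, Algebra.top_toSubmodule] at this
  exact ⟨this⟩

theorem exists_monic_mem_of_ne_bot {k : Type*} [Field k] {A : Subalgebra k k[X]} (hA : A ≠ ⊥) :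
    ∃ p : k[X], p.Monic ∧ p.natDegree ≠ 0 ∧ p ∈ A := by
  obtain ⟨f, hfA, hf⟩ := SetLike.exists_of_lt (bot_lt_iff_ne_bot.mpr hA)
  have hdeg : f.natDegree ≠ 0 := fun h ↦ hf <| Algebra.mem_bot.mpr <| by
    simpa [algebraMap_eq] using natDegree_eq_zero.mp h
  have hf0 : f ≠ 0 := by rintro rfl; simp at hdeg
  refine ⟨f * C f.leadingCoeff⁻¹, monic_mul_leadingCoeff_inv hf0, ?_, ?_⟩
  · rwa [natDegree_mul_C (inv_ne_zero (leadingCoeff_ne_zero.mpr hf0))]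
  · exact mul_mem hfA (A.algebraMap_mem _)

end Polynomial

/-- Every `k`-subalgebra of the polynomial ring `k[x]` in one variable over a field `k`
is finitely generated as a `k`-algebra. -/
theorem subalgebra_of_polynomial_fg (k : Type*) [Field k]
    (A : Subalgebra k (Polynomial k)) : A.FG := by
  rcases eq_or_ne A ⊥ with rfl | hA
  · exact Subalgebra.fg_bot
  obtain ⟨p, hp, hdeg, hpA⟩ := exists_monic_mem_of_ne_bot hA
  have := finite_of_monic_mem hp hdeg hpA
  exact A.fg_top.mp <| fg_of_fg_of_fg k A k[X] Algebra.FiniteType.out Module.Finite.fg_top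
    Subtype.val_injective
end

section
/- If A is a k-subalgebra of k[x] containing a non-constant polynomial, then k[x] is integral over A. -/
/-! Scaling `p` to a monic `q ∈ A`, the variable `X` is a root of the monic polynomial
`q(T) - q` over `A`, so `X` is integral over `A`; since the integral closure of `A` is a
subalgebra and `X` generates `k[X]`, every polynomial is integral over `A`. -/

open Polynomial

theorem Polynomial.isIntegral_X_of_mem_of_natDegree_pos {k : Type*} [Field k]
    (A : Subalgebra k k[X]) {p : k[X]} (hp : p ∈ A) (hdeg : 0 < p.natDegree) :
    IsIntegral A (X : k[X]) := by
  have hp0 : p ≠ 0 := ne_zero_of_natDegree_gt hdeg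
  set q := p * C p.leadingCoeff⁻¹
  have hq : q.Monic := monic_mul_leadingCoeff_inv hp0
  have hqA : q ∈ A := A.mul_mem hp (A.algebraMap_mem _)
  refine .of_aeval_monic (hq.map (algebraMap k A)) ?_ ?_
  · rw [hq.natDegree_map, natDegree_mul_leadingCoeff_inv _ hp0]
    exact hdeg.ne'
  · rw [aeval_map_algebraMap, aeval_X_left_apply]
    exact isIntegral_algebraMap (R := A) (x := ⟨q, hqA⟩)

/-- If a `k`-subalgebra `A` of `k[x]` contains a non-constant polynomial, then `k[x]` is
integral over `A`. -/
theorem polynomial_integral_over_subalgebra (k : Type*) [Field k]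
    (A : Subalgebra k (Polynomial k))
    (p : Polynomial k) (hp : p ∈ A) (hdeg : 0 < p.natDegree) :
    ∀ q : Polynomial k, IsIntegral A q := by
  intro q
  have hX : X ∈ (integralClosure A k[X]).restrictScalars k :=
    isIntegral_X_of_mem_of_natDegree_pos A hp hdeg
  exact Algebra.adjoin_le (Set.singleton_subset_iff.mpr hX) (adjoin_X (R := k) ▸ Algebra.mem_top)
end

section
/- Let ω be a weighted degree on S = ℂ[x,y,z₁,z₂] and δ a degree-like function on ℂ[x,y] with δ(fg) = δ(f)+δ(g) for all f,g ≠ 0, and let π : S → ℂ[x,y] be a surjective ℂ-algebra homomorphism with ω(F) ≥ δ(π(F)) for all F. Then the ideal J of S generated by all ω-homogeneous polynomials F with ω(F) > δ(π(F)) is a prime ideal. -/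
/-!
The ideal `J` is generated by homogeneous elements, so it is homogeneous and primality only has
to be tested on homogeneous elements. The elements `F` all of whose homogeneous components `F_d`
satisfy `δ (π F_d) < d` form an ideal containing the generators of `J` (multiplying by a
homogeneous `H` adds `δ (π H) ≤ deg H` on the left and `deg H` on the right). Hence a homogeneous
`F` of degree `d` lies in `J` iff `δ (π F) < d`, and otherwise `δ (π F) = d`. For homogeneous
`F, G ∉ J` multiplicativity of `δ` then gives `δ (π (F * G)) = deg (F * G)`, so `F * G ∉ J`.
-/

open MvPolynomial DirectSum

variable {ι A : Type*} [LinearOrder ι]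

theorem WithBot.add_lt_coe_add [AddCommMonoid ι] [IsOrderedCancelAddMonoid ι] {a b : WithBot ι}
    {m n : ι} (ha : a ≤ m) (hb : b < n) : a + b < ((m + n : ι) : WithBot ι) := by
  cases a with
  | bot => simp
  | coe a => rw [WithBot.coe_add]; exact WithBot.add_lt_add_of_le_of_lt WithBot.coe_ne_bot ha hb

structure IsSemidegree [AddMonoid ι] [Semiring A] (δ : A → WithBot ι) : Prop where
  add_le : ∀ f g, δ (f + g) ≤ max (δ f) (δ g)
  map_mul : ∀ f g, δ (f * g) = δ f + δ g
  eq_bot_iff : ∀ f, δ f = ⊥ ↔ f = 0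

namespace IsSemidegree

variable [AddMonoid ι] [Semiring A] {δ : A → WithBot ι}

theorem map_zero (hδ : IsSemidegree δ) : δ 0 = ⊥ := (hδ.eq_bot_iff 0).2 rfl

theorem map_one [IsLeftCancelAdd ι] [Nontrivial A] (hδ : IsSemidegree δ) : δ 1 = 0 := by
  obtain ⟨n, hn⟩ := WithBot.ne_bot_iff_exists.1 <| (hδ.eq_bot_iff 1).not.2 one_ne_zero
  have h := hδ.map_mul 1 1
  rw [one_mul, ← hn, ← WithBot.coe_add, WithBot.coe_inj, left_eq_add] at h
  rw [← hn, h, WithBot.coe_zero]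

theorem map_sum_lt (hδ : IsSemidegree δ) {κ : Type*} (s : Finset κ) (f : κ → A) {n : ι}
    (h : ∀ k ∈ s, δ (f k) < n) : δ (∑ k ∈ s, f k) < n :=
  Finset.sum_induction f (fun x ↦ δ x < n)
    (fun _ _ hx hy ↦ (hδ.add_le _ _).trans_lt (max_lt hx hy))
    (hδ.map_zero ▸ WithBot.bot_lt_coe n) h

end IsSemidegree

section Graded

variable [Semiring A] {σ S : Type*} [CommRing S] [SetLike σ S] {𝒜 : ι → σ}
  {δ : A → WithBot ι} {φ : S →+* A}

variable (𝒜 δ φ) in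
def leadingIdeal : Ideal S :=
  Ideal.span {x | ∃ i, x ∈ 𝒜 i ∧ δ (φ x) < i}

theorem eq_of_notMem_leadingIdeal (hle : ∀ i, ∀ x ∈ 𝒜 i, δ (φ x) ≤ i) {x : S} {i : ι}
    (hx : x ∈ 𝒜 i) (hJ : x ∉ leadingIdeal 𝒜 δ φ) : δ (φ x) = i :=
  (hle i x hx).antisymm <| not_lt.1 fun hlt ↦ hJ <| Ideal.subset_span ⟨i, hx, hlt⟩

variable [AddCommGroup ι] [IsOrderedAddMonoid ι] [AddSubmonoidClass σ S] [GradedRing 𝒜]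

variable (𝒜 φ) in
def strictComponentsIdeal (hδ : IsSemidegree δ) (hle : ∀ i, ∀ x ∈ 𝒜 i, δ (φ x) ≤ i) :
    Ideal S where
  carrier := {x | ∀ i, δ (φ (decompose 𝒜 x i)) < i}
  zero_mem' i := by simp [hδ.map_zero]
  add_mem' hx hy i := by
    rw [decompose_add, DirectSum.add_apply, AddMemClass.coe_add, map_add]
    exact (hδ.add_le _ _).trans_lt (max_lt (hx i) (hy i))
  smul_mem' r x hx n := by
    classical
    rw [smul_eq_mul, ← sum_support_decompose 𝒜 r, Finset.sum_mul, decompose_sum,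
      DirectSum.sum_apply, AddSubmonoidClass.coe_finsetSum, map_sum]
    refine hδ.map_sum_lt _ _ fun i _ ↦ ?_
    rw [← add_sub_cancel i n, coe_decompose_mul_add_of_left_mem 𝒜 (SetLike.coe_mem _), map_mul,
      hδ.map_mul]
    exact WithBot.add_lt_coe_add (hle i _ (SetLike.coe_mem _)) (hx _)

theorem leadingIdeal_le_strictComponentsIdeal (hδ : IsSemidegree δ)
    (hle : ∀ i, ∀ x ∈ 𝒜 i, δ (φ x) ≤ i) :
    leadingIdeal 𝒜 δ φ ≤ strictComponentsIdeal 𝒜 φ hδ hle := by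
  refine Ideal.span_le.2 ?_
  rintro x ⟨i, hx, hlt⟩ j
  by_cases hij : i = j
  · rwa [← hij, decompose_of_mem_same 𝒜 hx]
  · rw [decompose_of_mem_ne 𝒜 hx hij, map_zero, hδ.map_zero]
    exact WithBot.bot_lt_coe j

theorem lt_of_mem_leadingIdeal (hδ : IsSemidegree δ) (hle : ∀ i, ∀ x ∈ 𝒜 i, δ (φ x) ≤ i)
    {x : S} {i : ι} (hx : x ∈ 𝒜 i) (hJ : x ∈ leadingIdeal 𝒜 δ φ) : δ (φ x) < i := by
  simpa [decompose_of_mem_same 𝒜 hx] using leadingIdeal_le_strictComponentsIdeal hδ hle hJ i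

theorem leadingIdeal_isPrime [Nontrivial A] (hδ : IsSemidegree δ)
    (hle : ∀ i, ∀ x ∈ 𝒜 i, δ (φ x) ≤ i) : (leadingIdeal 𝒜 δ φ).IsPrime := by
  refine (Ideal.homogeneous_span 𝒜 _ ?_).isPrime_of_homogeneous_mem_or_mem ?_ ?_
  · rintro x ⟨i, hx, -⟩
    exact ⟨i, hx⟩
  · intro htop
    have h := lt_of_mem_leadingIdeal hδ hle SetLike.GradedOne.one_mem
      ((Ideal.eq_top_iff_one _).1 htop)
    rw [map_one, hδ.map_one] at h
    exact lt_irrefl _ h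
  · rintro x y ⟨i, hx⟩ ⟨j, hy⟩ hxy
    by_contra! ⟨hxJ, hyJ⟩
    have h := lt_of_mem_leadingIdeal hδ hle (SetLike.GradedMul.mul_mem hx hy) hxy
    rw [map_mul, hδ.map_mul, eq_of_notMem_leadingIdeal hle hx hxJ,
      eq_of_notMem_leadingIdeal hle hy hyJ, WithBot.coe_add] at h
    exact lt_irrefl _ h

end Graded

theorem leading_ideal_is_prime_general (w : Fin 4 → ℤ)
    (δ : MvPolynomial (Fin 2) ℂ → WithBot ℤ)
    (hadd : ∀ f g, δ (f + g) ≤ max (δ f) (δ g))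
    (hmul : ∀ f g, δ (f * g) = δ f + δ g)
    (hbot : ∀ f, δ f = ⊥ ↔ f = 0)
    (π : MvPolynomial (Fin 4) ℂ →ₐ[ℂ] MvPolynomial (Fin 2) ℂ)
    (hle : ∀ F : MvPolynomial (Fin 4) ℂ, δ (π F) ≤ weightedTotalDegree' w F) :
    (Ideal.span {F : MvPolynomial (Fin 4) ℂ |
        ∃ d : ℤ, IsWeightedHomogeneous w F d ∧ δ (π F) < (d : WithBot ℤ)}).IsPrime := by
  let _ := weightedGradedAlgebra ℂ w
  have hδ : IsSemidegree δ := ⟨hadd, hmul, hbot⟩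
  have hle_homog : ∀ d, ∀ F ∈ weightedHomogeneousSubmodule ℂ w d, δ (π F) ≤ d := by
    intro d F hF
    rcases eq_or_ne F 0 with rfl | hF0
    · rw [map_zero, hδ.map_zero]
      exact bot_le
    · exact (hle F).trans_eq (IsWeightedHomogeneous.weighted_total_degree hF hF0)
  exact (leadingIdeal_isPrime (φ := π.toRingHom) hδ hle_homog :)

/-- Let `ω` be a weighted degree on `S = ℂ[x,y,z₁,z₂]` (given by integer weights `w` on the
variables), `δ` a semidegree on `ℂ[x,y]`, and `π : S → ℂ[x,y]` a surjective `ℂ`-algebra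
homomorphism with `ω(F) ≥ δ(π(F))` for all `F`.  Then the ideal `J` of `S` generated by all
`ω`-homogeneous polynomials `F` with `ω(F) > δ(π(F))` is a prime ideal. -/
theorem leading_ideal_is_prime (w : Fin 4 → ℤ)
    (δ : MvPolynomial (Fin 2) ℂ → WithBot ℤ)
    (hadd : ∀ f g, δ (f + g) ≤ max (δ f) (δ g))
    (hmul : ∀ f g, δ (f * g) = δ f + δ g)
    (hbot : ∀ f, δ f = ⊥ ↔ f = 0)
    (π : MvPolynomial (Fin 4) ℂ →ₐ[ℂ] MvPolynomial (Fin 2) ℂ)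
    (hπ : Function.Surjective π)
    (hle : ∀ F : MvPolynomial (Fin 4) ℂ, δ (π F) ≤ weightedTotalDegree' w F) :
    (Ideal.span {F : MvPolynomial (Fin 4) ℂ |
        ∃ d : ℤ, IsWeightedHomogeneous w F d ∧ δ (π F) < (d : WithBot ℤ)}).IsPrime :=
  leading_ideal_is_prime_general w δ hadd hmul hbot π hle
end

section
/- Let δ₁ be the degree-like function on ℂ[x,y] given by the weighted degree on ℂ(x,y) = ℂ(x, y₁) with weights 1 for x and −3 for y₁ := y − x⁵ − x⁻². Then the graded algebra ℂ[x,y]^{δ₁} = ⊕_{d≥0} {f : δ₁(f) ≤ d} t^d is a finitely generated ℂ-algebra. -/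
open Polynomial LaurentPolynomial

/-- The expansion of `f ∈ ℂ[x,y]` in `ℂ[x,x⁻¹][y₁]`, where `y₁ = y - x⁵ - x⁻²`:
substitute `x ↦ x` and `y ↦ y₁ + x⁵ + x⁻²` (here `Polynomial.X` plays the role of `y₁`
and the coefficients are Laurent polynomials in `x`). -/
noncomputable def expandY1 (f : MvPolynomial (Fin 2) ℂ) :
    Polynomial (LaurentPolynomial ℂ) :=
  MvPolynomial.aeval
    ![Polynomial.C (T 1), Polynomial.X + Polynomial.C (T 5 + T (-2))] f

/-- The weighted degree `δ₁` on `ℂ[x,y]` with weights `1` for `x` and `-3` for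
`y₁ = y - x⁵ - x⁻²`:  writing `f = Σ c_{αβ} x^α y₁^β`, `δ₁ f = max {α - 3β : c_{αβ} ≠ 0}`. -/
noncomputable def delta1 (f : MvPolynomial (Fin 2) ℂ) : WithBot ℤ :=
  ((expandY1 f).support.biUnion fun β =>
    ((expandY1 f).coeff β).coeff.support.image fun α => α - 3 * (β : ℤ)).max

/-!
In the coordinates `x, y₁` the elements of `ℂ[x,y]` are polynomials in `y₁` with Laurent
coefficients in `x`. A monomial `x^α y₁^β` with `α ≥ 2β` is `x^s v^β` for `v = x²y₁ = x²y - x⁷ - 1`,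
and when `α - 3β ≤ d` its product with `t^d` is a monomial in `xv, v, xt, t`. Removing these
monomials leaves an element of `ℂ[x,y]` all of whose monomials have `α < 2β`, hence `δ₁ < 0`; such
an element lies in `ℂ[u, xu, v]`, `u = y - x⁵ = y₁ + x⁻²`, by induction on the `y₁`-degree `B`:
its leading coefficient is a polynomial `q(x)` (not just a Laurent polynomial) of degree `< 2B`,
`q(x) uᴮ` has the same leading term, and `x^a uᴮ ∈ ℂ[u, xu, v]` for `a ≤ 2B` because
`x²u = v + 1`. So `ℂ[x,y]^{δ₁}` is generated by `u, xu, v, xv, t, xt`.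
-/

section Semiring

variable {R : Type*} [Semiring R] {w n m : ℤ} {P Q : R[T;T⁻¹][X]}

def WeightedDegLE (w n : ℤ) (P : R[T;T⁻¹][X]) : Prop :=
  ∀ (β : ℕ) (α : ℤ), (P.coeff β).coeff α ≠ 0 → α + w * β ≤ n

theorem WeightedDegLE.mono (hP : WeightedDegLE w n P) (hnm : n ≤ m) : WeightedDegLE w m P :=
  fun β α h => (hP β α h).trans hnm

theorem weightedDegLE_zero : WeightedDegLE w n (0 : R[T;T⁻¹][X]) := fun β α h => by simp at h

theorem WeightedDegLE.add (hP : WeightedDegLE w n P) (hQ : WeightedDegLE w n Q) :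
    WeightedDegLE w n (P + Q) := by
  intro β α h
  by_cases hPα : (P.coeff β).coeff α = 0
  · exact hQ β α (by simpa [hPα] using h)
  · exact hP β α hPα

theorem WeightedDegLE.sum {ι : Type*} {s : Finset ι} {F : ι → R[T;T⁻¹][X]}
    (h : ∀ i ∈ s, WeightedDegLE w n (F i)) : WeightedDegLE w n (∑ i ∈ s, F i) :=
  Finset.sum_induction F (WeightedDegLE w n) (fun _ _ => add) weightedDegLE_zero h

theorem weightedDegLE_smul_C_T_mul_X_pow {α : ℤ} {β : ℕ} (c : R) (h : α + w * β ≤ n) :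
    WeightedDegLE w n (c • (Polynomial.C (T α : R[T;T⁻¹]) * X ^ β)) := by
  intro β' α' hne
  rw [coeff_smul, coeff_C_mul_X_pow] at hne
  split_ifs at hne with hβ
  · subst hβ
    rw [AddMonoidAlgebra.coeff_smul, Finsupp.smul_apply, T_apply] at hne
    split_ifs at hne with hα
    · exact hα ▸ h
    · simp at hne
  · simp at hne

theorem weightedDegLE_C_T (α : ℤ) : WeightedDegLE w α (Polynomial.C (T α : R[T;T⁻¹])) := by
  simpa using weightedDegLE_smul_C_T_mul_X_pow (w := w) (β := 0) (1 : R) (by simp)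

theorem weightedDegLE_X : WeightedDegLE w w (X : R[T;T⁻¹][X]) := by
  simpa using weightedDegLE_smul_C_T_mul_X_pow (w := w) (α := 0) (β := 1) (1 : R) (by simp)

theorem WeightedDegLE.mul (hP : WeightedDegLE w n P) (hQ : WeightedDegLE w m Q) :
    WeightedDegLE w (n + m) (P * Q) := by
  classical
  intro β α h
  rw [coeff_mul, AddMonoidAlgebra.coeff_sum, Finsupp.finsetSum_apply] at h
  obtain ⟨⟨i, j⟩, hij, hne⟩ := Finset.exists_ne_zero_of_sum_ne_zero h
  obtain ⟨α₁, h₁, α₂, h₂, rfl⟩ := Finset.mem_add.1 <|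
    AddMonoidAlgebra.support_coeff_mul_subset _ _ (Finsupp.mem_support_iff.2 hne)
  have hPα₁ := hP i α₁ (Finsupp.mem_support_iff.1 h₁)
  have hQα₂ := hQ j α₂ (Finsupp.mem_support_iff.1 h₂)
  rw [← Finset.HasAntidiagonal.mem_antidiagonal.1 hij]
  push_cast
  linarith

theorem WeightedDegLE.pow (hP : WeightedDegLE w n P) (k : ℕ) :
    WeightedDegLE w (k * n) (P ^ k) := by
  induction k with
  | zero => simpa using weightedDegLE_C_T (R := R) (w := w) 0
  | succ k ih => simpa [pow_succ, add_mul] using ih.mul hP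

theorem WeightedDegLE.C_coeff (hP : WeightedDegLE w n P) (β : ℕ) :
    WeightedDegLE w (n - w * β) (Polynomial.C (P.coeff β)) := by
  intro β' α h
  rw [coeff_C] at h
  split_ifs at h with hβ
  · have hPα := hP β α h
    simp only [hβ, CharP.cast_eq_zero, mul_zero, add_zero]
    linarith
  · simp at h

@[elab_as_elim]
theorem WeightedDegLE.induction {motive : R[T;T⁻¹][X] → Prop} (zero : motive 0)
    (add : ∀ P Q, motive P → motive Q → motive (P + Q))
    (monomial : ∀ (c : R) (α : ℤ) (β : ℕ), α + w * β ≤ n →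
      motive (c • (Polynomial.C (T α) * X ^ β)))
    (hP : WeightedDegLE w n P) : motive P := by
  rw [P.as_sum_support]
  refine Finset.sum_induction _ motive add zero fun β _ => ?_
  rw [← (P.coeff β).sum_coeff_single, Finsupp.sum, map_sum]
  refine Finset.sum_induction _ motive add zero fun α hα => ?_
  have hmonomial : Polynomial.monomial β (AddMonoidAlgebra.single α ((P.coeff β).coeff α)) =
      (P.coeff β).coeff α • (Polynomial.C (T α) * X ^ β) := by
    rw [C_mul_X_pow_eq_monomial, smul_monomial, T, AddMonoidAlgebra.smul_single', mul_one]
  exact hmonomial ▸ monomial _ α β (hP β α (Finsupp.mem_support_iff.1 hα))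

theorem coeff_toLaurent_natCast (q : R[X]) (a : ℕ) :
    (toLaurent q).coeff a = q.coeff a := by
  rw [coeff_toLaurent]
  exact Finsupp.mapDomain_apply Nat.castEmbedding.injective _ a

end Semiring

section Ring

variable {R : Type*} [Ring R] {w n : ℤ} {P Q : R[T;T⁻¹][X]}

theorem WeightedDegLE.neg (hP : WeightedDegLE w n P) : WeightedDegLE w n (-P) :=
  fun β α h => hP β α (by simpa using h)

theorem WeightedDegLE.sub (hP : WeightedDegLE w n P) (hQ : WeightedDegLE w n Q) :
    WeightedDegLE w n (P - Q) :=
  sub_eq_add_neg P Q ▸ hP.add hQ.neg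

end Ring

namespace Delta1

noncomputable def expandY1Hom : MvPolynomial (Fin 2) ℂ →ₐ[ℂ] ℂ[T;T⁻¹][X] :=
  MvPolynomial.aeval ![Polynomial.C (T 1), X + Polynomial.C (T 5 + T (-2))]

theorem expandY1Hom_apply (f : MvPolynomial (Fin 2) ℂ) : expandY1Hom f = expandY1 f := rfl

theorem delta1_le_iff {f : MvPolynomial (Fin 2) ℂ} {d : ℤ} :
    delta1 f ≤ d ↔ WeightedDegLE (-3) d (expandY1Hom f) := by
  rw [delta1, Finset.max_le_iff, ← expandY1Hom_apply]
  constructor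
  · intro h β α hne
    have hmem : α - 3 * (β : ℤ) ∈ (expandY1Hom f).support.biUnion fun β =>
        ((expandY1Hom f).coeff β).coeff.support.image fun α => α - 3 * (β : ℤ) :=
      Finset.mem_biUnion.2 ⟨β, mem_support_iff.2 fun h0 => by simp [h0] at hne,
        Finset.mem_image.2 ⟨α, Finsupp.mem_support_iff.2 hne, rfl⟩⟩
    have hβα : α - 3 * (β : ℤ) ≤ d := by exact_mod_cast h _ hmem
    linarith
  · intro h a ha
    obtain ⟨β, -, hmem⟩ := Finset.mem_biUnion.1 ha
    obtain ⟨α, hα, rfl⟩ := Finset.mem_image.1 hmem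
    have hβα := h β α (Finsupp.mem_support_iff.1 hα)
    exact_mod_cast (by linarith : α - 3 * (β : ℤ) ≤ d)

noncomputable def u : MvPolynomial (Fin 2) ℂ := .X 1 - .X 0 ^ 5

noncomputable def v : MvPolynomial (Fin 2) ℂ := .X 0 ^ 2 * .X 1 - .X 0 ^ 7 - 1

theorem expandY1Hom_X_zero : expandY1Hom (.X 0) = Polynomial.C (T 1) := by
  simp [expandY1Hom]

theorem expandY1Hom_u : expandY1Hom u = X + Polynomial.C (T (-2)) := by
  simp only [u, expandY1Hom, map_sub, map_pow, map_add, MvPolynomial.aeval_X,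
    Matrix.cons_val_zero, Matrix.cons_val_one, Matrix.cons_val_fin_one, ← Polynomial.C_pow, T_pow]
  push_cast
  ring

theorem expandY1Hom_v : expandY1Hom v = Polynomial.C (T 2) * X := by
  simp only [v, expandY1Hom, map_sub, map_mul, map_pow, map_one, MvPolynomial.aeval_X]
  simp only [Matrix.cons_val_zero, Matrix.cons_val_one, ← Polynomial.C_pow, T_pow, map_add]
  have h7 : Polynomial.C (T 7 : ℂ[T;T⁻¹]) = Polynomial.C (T 2) * Polynomial.C (T 5) := by
    rw [← map_mul, ← T_add]; norm_num
  have h0 : Polynomial.C (T 2 : ℂ[T;T⁻¹]) * Polynomial.C (T (-2)) = 1 := by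
    rw [← map_mul, ← T_add]; norm_num
  push_cast
  linear_combination h0 - h7

theorem expandY1Hom_X_zero_pow_mul_v_pow (s b : ℕ) :
    expandY1Hom (.X 0 ^ s * v ^ b) = Polynomial.C (T (s + 2 * b)) * X ^ b := by
  rw [map_mul, map_pow, map_pow, expandY1Hom_X_zero, expandY1Hom_v, mul_pow, ← map_pow,
    ← map_pow, T_pow, T_pow, T_add, map_mul]
  ring_nf

theorem expandY1Hom_aeval (q : ℂ[X]) :
    expandY1Hom (aeval (.X 0) q) = Polynomial.C (toLaurent q) := by
  suffices expandY1Hom.comp (aeval (.X 0)) = CAlgHom.comp toLaurentAlg from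
    DFunLike.congr_fun this q
  exact algHom_ext (by simp [expandY1Hom_X_zero])

theorem expandY1Hom_eq_taylor (f : MvPolynomial (Fin 2) ℂ) :
    expandY1Hom f =
      taylor (T 5 + T (-2)) (((Bivariate.equivMvPolynomial ℂ).symm f).map toLaurent) := by
  suffices expandY1Hom = (((taylorAlgHom (T 5 + T (-2))).restrictScalars ℂ).comp
      (mapAlgHom toLaurentAlg)).comp (Bivariate.equivMvPolynomial ℂ).symm.toAlgHom from
    DFunLike.congr_fun this f
  refine MvPolynomial.algHom_ext fun i => ?_
  fin_cases i <;> simp [expandY1Hom]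

theorem expandY1Hom_injective : Function.Injective expandY1Hom := by
  intro f g h
  simp only [expandY1Hom_eq_taylor] at h
  exact (Bivariate.equivMvPolynomial ℂ).symm.injective <|
    map_injective _ toLaurent_injective (taylor_injective _ h)

theorem leadingCoeff_expandY1Hom (f : MvPolynomial (Fin 2) ℂ) :
    (expandY1Hom f).leadingCoeff =
      toLaurent ((Bivariate.equivMvPolynomial ℂ).symm f).leadingCoeff := by
  rw [expandY1Hom_eq_taylor, leadingCoeff_taylor,
    leadingCoeff_map_of_injective toLaurent_injective]

theorem weightedDegLE_expandY1Hom_X_zero {w : ℤ} : WeightedDegLE w 1 (expandY1Hom (.X 0)) :=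
  expandY1Hom_X_zero ▸ weightedDegLE_C_T 1

theorem weightedDegLE_expandY1Hom_u {w : ℤ} (hw : w ≤ -2) :
    WeightedDegLE w (-2) (expandY1Hom u) :=
  expandY1Hom_u ▸ (weightedDegLE_X.mono hw).add (weightedDegLE_C_T (-2))

theorem weightedDegLE_expandY1Hom_v {w : ℤ} : WeightedDegLE w (2 + w) (expandY1Hom v) :=
  expandY1Hom_v ▸ (weightedDegLE_C_T 2).mul weightedDegLE_X

theorem X_zero_pow_mul_u_pow_mem_adjoin {a B : ℕ} (h : a ≤ 2 * B) :
    .X 0 ^ a * u ^ B ∈ Algebra.adjoin ℂ {u, .X 0 * u, v} := by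
  obtain ⟨c, e, f, rfl, rfl⟩ : ∃ c e f, a = 2 * c + e ∧ B = c + e + f :=
    ⟨a - B, a - 2 * (a - B), B - a, by omega, by omega⟩
  have hx2u : MvPolynomial.X 0 ^ 2 * u = v + 1 := by simp only [u, v]; ring
  have key : (.X 0 : MvPolynomial (Fin 2) ℂ) ^ (2 * c + e) * u ^ (c + e + f) =
      (v + 1) ^ c * (.X 0 * u) ^ e * u ^ f := by
    rw [← hx2u]; ring
  rw [key]
  refine mul_mem (mul_mem (pow_mem (add_mem ?_ (one_mem _)) _) (pow_mem ?_ _)) (pow_mem ?_ _) <;>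
    exact Algebra.subset_adjoin (by simp)

theorem aeval_mul_u_pow_mem_adjoin {q : ℂ[X]} {B : ℕ} (h : ∀ a ∈ q.support, a ≤ 2 * B) :
    aeval (.X 0) q * u ^ B ∈ Algebra.adjoin ℂ {u, .X 0 * u, v} := by
  rw [aeval_def, eval₂_eq_sum, Polynomial.sum, Finset.sum_mul]
  refine Subalgebra.sum_mem _ fun a ha => ?_
  rw [mul_assoc, ← Algebra.smul_def]
  exact Subalgebra.smul_mem _ (X_zero_pow_mul_u_pow_mem_adjoin (h a ha)) _

theorem degree_expandY1Hom_sub_lt {g : MvPolynomial (Fin 2) ℂ} (hg : g ≠ 0) :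
    (expandY1Hom (g - aeval (.X 0) ((Bivariate.equivMvPolynomial ℂ).symm g).leadingCoeff *
      u ^ (expandY1Hom g).natDegree)).degree < (expandY1Hom g).degree := by
  set q := ((Bivariate.equivMvPolynomial ℂ).symm g).leadingCoeff
  have hEg : expandY1Hom g ≠ 0 := (map_ne_zero_iff _ expandY1Hom_injective).2 hg
  have hq : toLaurent q ≠ 0 := by
    simpa [q, toLaurent_ne_zero] using hg
  have hEh : expandY1Hom (aeval (.X 0) q * u ^ (expandY1Hom g).natDegree) =
      Polynomial.C (toLaurent q) * (X + Polynomial.C (T (-2))) ^ (expandY1Hom g).natDegree := by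
    rw [map_mul, map_pow, expandY1Hom_aeval, expandY1Hom_u]
  rw [map_sub]
  refine degree_sub_lt_left ?_ hEg ?_
  · rw [hEh, degree_C_mul hq, degree_pow, degree_X_add_C, nsmul_one, degree_eq_natDegree hEg]
  · rw [hEh, leadingCoeff_expandY1Hom, leadingCoeff_mul, leadingCoeff_C, leadingCoeff_pow,
      leadingCoeff_X_add_C, one_pow, mul_one]

theorem mem_adjoin_of_weightedDegLE {g : MvPolynomial (Fin 2) ℂ}
    (hg : WeightedDegLE (-2) (-1) (expandY1Hom g)) :
    g ∈ Algebra.adjoin ℂ {u, .X 0 * u, v} := by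
  induction hd : (expandY1Hom g).degree using WellFoundedLT.induction generalizing g with
  | ind d ih =>
    obtain rfl | hg0 := eq_or_ne g 0
    · exact zero_mem _
    set B := (expandY1Hom g).natDegree
    set q := ((Bivariate.equivMvPolynomial ℂ).symm g).leadingCoeff
    have hlc : (expandY1Hom g).coeff B = toLaurent q := leadingCoeff_expandY1Hom g
    have hq : ∀ a ∈ q.support, a ≤ 2 * B := fun a ha => by
      have := hg B a (by rwa [hlc, coeff_toLaurent_natCast, ← mem_support_iff])
      omega
    have hh : WeightedDegLE (-2) (-1) (expandY1Hom (aeval (.X 0) q * u ^ B)) := by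
      rw [map_mul, map_pow, expandY1Hom_aeval, ← hlc]
      convert (hg.C_coeff B).mul ((weightedDegLE_expandY1Hom_u le_rfl).pow B) using 1
      ring
    rw [← sub_add_cancel g (aeval (.X 0) q * u ^ B)]
    have hlt := hd ▸ degree_expandY1Hom_sub_lt hg0
    exact add_mem (ih _ hlt (map_sub expandY1Hom _ _ ▸ hg.sub hh) rfl)
      (aeval_mul_u_pow_mem_adjoin hq)

def generators : Set (MvPolynomial (Fin 2) ℂ)[X] :=
  {Polynomial.C u, Polynomial.C (.X 0 * u), Polynomial.C v, Polynomial.C (.X 0 * v), X,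
    Polynomial.C (.X 0) * X}

theorem monomial_mem_adjoin_generators_of_mem {r : MvPolynomial (Fin 2) ℂ}
    (hr : r ∈ Algebra.adjoin ℂ {u, .X 0 * u, v}) (d : ℕ) :
    monomial d r ∈ Algebra.adjoin ℂ generators := by
  rw [← C_mul_X_pow_eq_monomial]
  refine mul_mem ?_ (pow_mem (Algebra.subset_adjoin (by simp [generators])) d)
  have hC : CAlgHom r ∈ (Algebra.adjoin ℂ {u, .X 0 * u, v}).map CAlgHom :=
    Subalgebra.mem_map.2 ⟨r, hr, rfl⟩
  rw [AlgHom.map_adjoin] at hC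
  refine Algebra.adjoin_mono ?_ hC
  simp [generators, Set.image_insert_eq, Set.insert_subset_iff]

theorem monomial_X_zero_pow_mul_v_pow_mem_adjoin {s b d : ℕ} (h : s ≤ b + d) :
    monomial d (.X 0 ^ s * v ^ b) ∈ Algebra.adjoin ℂ generators := by
  obtain ⟨m, e₁, e₂, e₃, rfl, rfl, rfl⟩ : ∃ m e₁ e₂ e₃, s = m + e₂ ∧ b = m + e₁ ∧ d = e₂ + e₃ :=
    ⟨min s b, b - s, s - b, d - (s - b), by omega, by omega, by omega⟩
  have key : monomial (e₂ + e₃) (.X 0 ^ (m + e₂) * v ^ (m + e₁)) =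
      Polynomial.C (.X 0 * v) ^ m * Polynomial.C v ^ e₁ * (Polynomial.C (.X 0) * X) ^ e₂ *
        X ^ e₃ := by
    rw [← C_mul_X_pow_eq_monomial]
    simp only [map_mul, map_pow]
    ring
  rw [key]
  refine mul_mem (mul_mem (mul_mem (pow_mem ?_ _) (pow_mem ?_ _)) (pow_mem ?_ _)) (pow_mem ?_ _) <;>
    exact Algebra.subset_adjoin (by simp [generators])

theorem exists_monomial_mem_adjoin_sub_weightedDegLE {d : ℕ} {P : ℂ[T;T⁻¹][X]}
    (hP : WeightedDegLE (-3) d P) : ∃ q, monomial d q ∈ Algebra.adjoin ℂ generators ∧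
      WeightedDegLE (-2) (-1) (P - expandY1Hom q) := by
  refine hP.induction ?zero ?add ?monomial
  case zero => exact ⟨0, by simp, by simpa using weightedDegLE_zero⟩
  case add =>
    rintro P Q ⟨p, hp, hPp⟩ ⟨q, hq, hQq⟩
    refine ⟨p + q, by rw [map_add]; exact add_mem hp hq, ?_⟩
    rw [map_add, add_sub_add_comm]
    exact hPp.add hQq
  case monomial =>
    intro c α β h
    by_cases hα : 2 * (β : ℤ) ≤ α
    · obtain ⟨s, rfl⟩ : ∃ s : ℕ, α = s + 2 * β := ⟨(α - 2 * β).toNat, by omega⟩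
      refine ⟨c • (.X 0 ^ s * v ^ β), ?_, ?_⟩
      · rw [← smul_monomial]
        exact Subalgebra.smul_mem _ (monomial_X_zero_pow_mul_v_pow_mem_adjoin (by omega)) c
      · rw [map_smul, expandY1Hom_X_zero_pow_mul_v_pow, sub_self]
        exact weightedDegLE_zero
    · exact ⟨0, by simp, by simpa using weightedDegLE_smul_C_T_mul_X_pow c (by omega)⟩

/-- The Rees algebra `ℂ[x,y]^{δ₁}`, with `Polynomial.X` in the role of `t`. -/
noncomputable def rees : Subalgebra ℂ (MvPolynomial (Fin 2) ℂ)[X] where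
  carrier := {p | ∀ d : ℕ, WeightedDegLE (-3) d (expandY1Hom (p.coeff d))}
  mul_mem' {p q} hp hq d := by
    rw [coeff_mul, map_sum]
    refine WeightedDegLE.sum fun ij hij => ?_
    rw [map_mul, ← Finset.HasAntidiagonal.mem_antidiagonal.1 hij, Nat.cast_add]
    exact (hp ij.1).mul (hq ij.2)
  add_mem' hp hq d := by
    rw [coeff_add, map_add]
    exact (hp d).add (hq d)
  algebraMap_mem' c d := by
    rw [Polynomial.algebraMap_apply, coeff_C]
    split_ifs with hd
    · simpa [hd, Algebra.smul_def] using
        weightedDegLE_smul_C_T_mul_X_pow (w := -3) (α := 0) (β := 0) c (by simp)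
    · simpa using weightedDegLE_zero

theorem monomial_mem_rees {r : MvPolynomial (Fin 2) ℂ} {d : ℕ}
    (hr : WeightedDegLE (-3) d (expandY1Hom r)) : monomial d r ∈ rees := by
  intro e
  rw [coeff_monomial]
  split_ifs with he
  · exact he ▸ hr
  · simpa using weightedDegLE_zero

theorem generators_subset_rees : generators ⊆ rees := by
  have hu := weightedDegLE_expandY1Hom_u (w := -3) (by norm_num)
  rintro p (rfl | rfl | rfl | rfl | rfl | rfl)
  · rw [← monomial_zero_left]
    exact monomial_mem_rees (hu.mono (by norm_num))
  · rw [← monomial_zero_left]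
    refine monomial_mem_rees ?_
    rw [map_mul]
    exact (weightedDegLE_expandY1Hom_X_zero.mul hu).mono (by norm_num)
  · rw [← monomial_zero_left]
    exact monomial_mem_rees (weightedDegLE_expandY1Hom_v.mono (by norm_num))
  · rw [← monomial_zero_left]
    refine monomial_mem_rees ?_
    rw [map_mul]
    exact (weightedDegLE_expandY1Hom_X_zero.mul weightedDegLE_expandY1Hom_v).mono (by norm_num)
  · rw [← monomial_one_one_eq_X]
    refine monomial_mem_rees ?_
    simpa using (weightedDegLE_C_T (R := ℂ) (w := -3) 0).mono zero_le_one
  · rw [C_mul_X_eq_monomial]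
    exact monomial_mem_rees weightedDegLE_expandY1Hom_X_zero

theorem monomial_mem_adjoin_generators {f : MvPolynomial (Fin 2) ℂ} {d : ℕ}
    (hf : WeightedDegLE (-3) d (expandY1Hom f)) :
    monomial d f ∈ Algebra.adjoin ℂ generators := by
  obtain ⟨q, hq, hfq⟩ := exists_monomial_mem_adjoin_sub_weightedDegLE hf
  rw [← sub_add_cancel f q, map_add]
  refine add_mem (monomial_mem_adjoin_generators_of_mem ?_ d) hq
  exact mem_adjoin_of_weightedDegLE (map_sub expandY1Hom f q ▸ hfq)

theorem adjoin_generators_eq_rees : Algebra.adjoin ℂ generators = rees := by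
  refine le_antisymm (Algebra.adjoin_le generators_subset_rees) fun p hp => ?_
  rw [p.as_sum_support]
  exact Subalgebra.sum_mem _ fun d _ => monomial_mem_adjoin_generators (hp d)

theorem coe_rees :
    (rees : Set (MvPolynomial (Fin 2) ℂ)[X]) = {p | ∀ d : ℕ, delta1 (p.coeff d) ≤ (d : ℤ)} := by
  ext p
  simp only [delta1_le_iff]
  rfl

end Delta1

/-- The graded algebra `ℂ[x,y]^{δ₁} = ⊕_{d ≥ 0} {f : δ₁(f) ≤ d} t^d` (realized as a subalgebra
of `ℂ[x,y][t]`) is a finitely generated `ℂ`-algebra. -/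
theorem delta1_filtration_fg :
    ∃ B : Subalgebra ℂ (Polynomial (MvPolynomial (Fin 2) ℂ)),
      (B : Set (Polynomial (MvPolynomial (Fin 2) ℂ))) =
        {p | ∀ d : ℕ, delta1 (p.coeff d) ≤ (d : ℤ)} ∧ B.FG :=
  ⟨Delta1.rees, Delta1.coe_rees,
    Delta1.adjoin_generators_eq_rees ▸ Subalgebra.fg_def.2 ⟨_, by simp [Delta1.generators], rfl⟩⟩
end

section
/- With δ₁, δ₂ the weighted degrees on ℂ[x,y] corresponding to weights (1, −3) in coordinates (x, y₁) and (x, y₂), where y₁ = y − x⁵ − x⁻² and y₂ = y + x⁵ − x⁻², the restrictions of δ₁ and δ₂ to the subring ℂ[x², y] coincide. -/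
open Polynomial LaurentPolynomial

/-- Expansion of `f ∈ ℂ[x,y]` in `ℂ[x,x⁻¹][y₂]` where `y₂ = y + x⁵ - x⁻²`
(substitute `y ↦ y₂ - x⁵ + x⁻²`). -/
noncomputable def expandY2 (f : MvPolynomial (Fin 2) ℂ) :
    Polynomial (LaurentPolynomial ℂ) :=
  MvPolynomial.aeval
    ![Polynomial.C (T 1), Polynomial.X + Polynomial.C (-T 5 + T (-2))] f

/-- `δ₂ f = max {α - 3β : c_{αβ} ≠ 0}` for `f = Σ c_{αβ} x^α y₂^β`. -/
noncomputable def delta2 (f : MvPolynomial (Fin 2) ℂ) : WithBot ℤ :=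
  ((expandY2 f).support.biUnion fun β =>
    ((expandY2 f).coeff β).coeff.support.image fun α => α - 3 * (β : ℤ)).max

/-!
The automorphism `x ↦ -x` of `ℂ[x, x⁻¹]` only changes signs of coefficients, so applied
coefficientwise it preserves every support entering the definition of `δ₁`. It sends
`x⁵ + x⁻²` to `-x⁵ + x⁻²`, so it carries the `y₁`-expansion of any `f ∈ ℂ[x², y]` to its
`y₂`-expansion; hence `δ₁ f = δ₂ f`.
-/

namespace LaurentPolynomial

variable {R : Type*} [CommRing R]

/-- The substitution `T ↦ -T`. -/
noncomputable def compNeg : R[T;T⁻¹] →ₐ[R] R[T;T⁻¹] :=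
  AddMonoidAlgebra.lift R R[T;T⁻¹] ℤ
    { toFun := fun n => n.toAdd.negOnePow • T n.toAdd
      map_one' := by simp [T_zero]
      map_mul' := fun a b => by
        simp only [toAdd_mul, Int.negOnePow_add, T_add, mul_smul, smul_mul_smul_comm] }

theorem compNeg_single (n : ℤ) (a : R) :
    compNeg (.single n a : R[T;T⁻¹]) = .single n (n.negOnePow • a) := by
  rw [compNeg, AddMonoidAlgebra.lift_single]
  simp only [MonoidHom.coe_mk, OneHom.coe_mk, toAdd_ofAdd, T, AddMonoidAlgebra.smul_single,
    smul_comm a, smul_eq_mul, mul_one]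

theorem coeff_compNeg (q : R[T;T⁻¹]) (m : ℤ) :
    (compNeg q).coeff m = m.negOnePow • q.coeff m := by
  induction q using AddMonoidAlgebra.induction_linear with
  | zero => simp
  | add f g hf hg =>
    simp only [map_add, AddMonoidAlgebra.coeff_add, Finsupp.add_apply, hf, hg, smul_add]
  | single n a =>
    rw [compNeg_single, AddMonoidAlgebra.coeff_single, AddMonoidAlgebra.coeff_single,
      Finsupp.single_apply, Finsupp.single_apply]
    split_ifs with h
    · rw [h]
    · rw [smul_zero]

theorem compNeg_T (n : ℤ) : compNeg (T n : R[T;T⁻¹]) = n.negOnePow • T n := by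
  rw [T, compNeg_single, AddMonoidAlgebra.smul_single]

theorem compNeg_T_of_even {n : ℤ} (hn : Even n) : compNeg (T n : R[T;T⁻¹]) = T n := by
  rw [compNeg_T, Int.negOnePow_even n hn, one_smul]

theorem compNeg_T_of_odd {n : ℤ} (hn : Odd n) : compNeg (T n : R[T;T⁻¹]) = -T n := by
  rw [compNeg_T, Int.negOnePow_odd n hn, Units.neg_smul, one_smul]

theorem compNeg_compNeg (q : R[T;T⁻¹]) : compNeg (compNeg q) = q := by
  ext m
  rw [coeff_compNeg, coeff_compNeg, smul_smul, Int.units_mul_self, one_smul]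

theorem compNeg_injective : Function.Injective (compNeg : R[T;T⁻¹] → R[T;T⁻¹]) :=
  Function.LeftInverse.injective compNeg_compNeg

theorem support_compNeg (q : R[T;T⁻¹]) : (compNeg q).coeff.support = q.coeff.support := by
  ext m
  rw [Finsupp.mem_support_iff, Finsupp.mem_support_iff, coeff_compNeg, ne_eq,
    smul_eq_zero_iff_eq]

theorem support_mapAlgHom_compNeg (p : R[T;T⁻¹][X]) :
    (Polynomial.mapAlgHom compNeg p).support = p.support := by
  rw [Polynomial.coe_mapAlgHom]
  exact Polynomial.support_map_of_injective p compNeg_injective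

end LaurentPolynomial

open MvPolynomial in
theorem expandY2_aeval_sq (f : MvPolynomial (Fin 2) ℂ) :
    expandY2 (aeval ![X 0 ^ 2, X 1] f) =
      Polynomial.mapAlgHom compNeg (expandY1 (aeval ![X 0 ^ 2, X 1] f)) := by
  unfold expandY1 expandY2
  simp only [comp_aeval_apply]
  refine congrArg (fun v => MvPolynomial.aeval v f) (funext fun i => ?_)
  fin_cases i
  · simp [compNeg_T_of_odd odd_one]
    ring
  · simp [compNeg_T_of_odd (n := 5) (by decide), compNeg_T_of_even (n := -2) (by decide)]

/-- The restrictions of `δ₁` and `δ₂` to the subring `ℂ[x²,y]` (the image of `ℂ[u,v]`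
under `u ↦ x²`, `v ↦ y`) coincide. -/
theorem delta1_eq_delta2_on_even :
    ∀ f : MvPolynomial (Fin 2) ℂ,
      delta1 (MvPolynomial.aeval ![(MvPolynomial.X 0 : MvPolynomial (Fin 2) ℂ) ^ 2,
        MvPolynomial.X 1] f) =
      delta2 (MvPolynomial.aeval ![(MvPolynomial.X 0 : MvPolynomial (Fin 2) ℂ) ^ 2,
        MvPolynomial.X 1] f) := by
  intro f
  unfold delta1 delta2
  simp only [expandY2_aeval_sq, support_mapAlgHom_compNeg, Polynomial.coeff_mapAlgHom_apply,
    support_compNeg]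
end
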